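/- If a nonnegative measurable function g on ℝ^d satisfies ∫_{|x|>R} g ≤ C R^{−1−μ} ∫_{R/2 ≤ |x| ≤ R} g for all R ≥ R₀, with constants C > 0, μ > 0, then for every m ≥ 0 one has ∫_{|x|>R} |x|^m g(x) dx < ∞ for all R ≥ 2R₀. -/
import Mathlib


open MeasureTheory

/-- the self-improving decay estimate
`∫_{|x|>R} g ≤ C R^{−1−μ} ∫_{R/2≤|x|≤R} g` for all `R ≥ R₀` implies
`∫_{|x|>R} |x|^m g < ∞` for every `m ≥ 0` and `R ≥ 2R₀`. -/
theorem polynomial_weights_integrable_of_selfimproving (d : ℕ) (hd : 1 ≤ d)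
    (g : EuclideanSpace ℝ (Fin d) → ENNReal) (hg : Measurable g)
    (hloc : ∀ R : ℝ, 0 < R →
      (∫⁻ x in {x : EuclideanSpace ℝ (Fin d) | ‖x‖ ≤ R}, g x) < ⊤)
    (R₀ C μ : ℝ) (hR₀ : 1 ≤ R₀) (hC : 0 < C) (hμ : 0 < μ)
    (hdecay : ∀ R : ℝ, R₀ ≤ R →
      (∫⁻ x in {x : EuclideanSpace ℝ (Fin d) | R < ‖x‖}, g x)
        ≤ ENNReal.ofReal (C * R ^ (-(1 + μ))) *
          ∫⁻ x in {x : EuclideanSpace ℝ (Fin d) | R / 2 ≤ ‖x‖ ∧ ‖x‖ ≤ R}, g x) :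
    ∀ m : ℝ, 0 ≤ m → ∀ R : ℝ, 2 * R₀ ≤ R →
      (∫⁻ x in {x : EuclideanSpace ℝ (Fin d) | R < ‖x‖},
        ENNReal.ofReal (‖x‖ ^ m) * g x) < ⊤ := by
  intro m hm R hR
  have hR₀pos : (0:ℝ) < R₀ := lt_of_lt_of_le one_pos hR₀
  have hRR₀ : R₀ ≤ R := le_trans (by linarith) hR
  have hRpos : (0:ℝ) < R := lt_of_lt_of_le hR₀pos hRR₀
  have hR1 : (1:ℝ) ≤ R := le_trans hR₀ hRR₀
  -- the tail integral
  set T : ℝ → ENNReal := fun r => ∫⁻ x in {x : EuclideanSpace ℝ (Fin d) | r < ‖x‖}, g x with hT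
  -- monotonicity of the tail
  have hTmono : ∀ a b : ℝ, a ≤ b → T b ≤ T a := by
    intro a b hab
    exact lintegral_mono_set (fun x hx => lt_of_le_of_lt hab hx)
  -- finiteness of tails
  have hfin : ∀ s : ℝ, R₀ ≤ s → T s < ⊤ := by
    intro s hs
    have hspos : (0:ℝ) < s := lt_of_lt_of_le hR₀pos hs
    refine lt_of_le_of_lt (hdecay s hs) ?_
    refine ENNReal.mul_lt_top ENNReal.ofReal_lt_top ?_
    have h1 : (∫⁻ x in {x : EuclideanSpace ℝ (Fin d) | s / 2 ≤ ‖x‖ ∧ ‖x‖ ≤ s}, g x)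
        ≤ ∫⁻ x in {x : EuclideanSpace ℝ (Fin d) | ‖x‖ ≤ s}, g x :=
      lintegral_mono_set (fun x hx => hx.2)
    exact lt_of_le_of_lt h1 (hloc s hspos)
  -- the basic step
  have hstep : ∀ s : ℝ, R₀ ≤ s →
      T s ≤ ENNReal.ofReal (C * s ^ (-(1 + μ))) * T (s / 4) := by
    intro s hs
    have hspos : (0:ℝ) < s := lt_of_lt_of_le hR₀pos hs
    refine le_trans (hdecay s hs) ?_
    refine mul_le_mul_right ?_ _
    refine lintegral_mono_set (fun x hx => ?_)
    have : s / 4 < s / 2 := by linarith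
    exact lt_of_lt_of_le this hx.1
  -- choose K with 4^K large
  obtain ⟨K, hK⟩ : ∃ K : ℕ, C * (4:ℝ) ^ (m + 1) < 4 ^ K :=
    pow_unbounded_of_one_lt _ (by norm_num)
  -- smallness of the constant for n ≥ K
  have hsmall : ∀ n : ℕ, K ≤ n →
      C * ((4:ℝ) ^ n * R) ^ (-(1 + μ)) ≤ (4:ℝ) ^ (-(m + 1)) := by
    intro n hn
    have h4n : (1:ℝ) ≤ (4:ℝ) ^ n := one_le_pow₀ (by norm_num : (1:ℝ) ≤ 4)
    have hbase : (0:ℝ) < (4:ℝ) ^ n * R := by positivity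
    have hb1 : (1:ℝ) ≤ (4:ℝ) ^ n * R := by nlinarith
    have key : C * (4:ℝ) ^ (m + 1) ≤ ((4:ℝ) ^ n * R) ^ (1 + μ) := by
      have h1 : (4:ℝ) ^ n * R ≤ ((4:ℝ) ^ n * R) ^ (1 + μ) := by
        nth_rewrite 1 [← Real.rpow_one ((4:ℝ) ^ n * R)]
        exact Real.rpow_le_rpow_of_exponent_le hb1 (by linarith)
      have h3 : (4:ℝ) ^ K ≤ (4:ℝ) ^ n := pow_le_pow_right₀ (by norm_num) hn
      have h4 : (4:ℝ) ^ n * 1 ≤ (4:ℝ) ^ n * R :=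
        mul_le_mul_of_nonneg_left hR1 (pow_pos (by norm_num : (0:ℝ) < 4) n).le
      nlinarith
    have hpos1 : (0:ℝ) < ((4:ℝ) ^ n * R) ^ (1 + μ) := Real.rpow_pos_of_pos hbase _
    have hpos2 : (0:ℝ) < (4:ℝ) ^ (m + 1) := Real.rpow_pos_of_pos (by norm_num) _
    rw [Real.rpow_neg hbase.le, Real.rpow_neg (by norm_num : (0:ℝ) ≤ 4)]
    calc C * (((4:ℝ) ^ n * R) ^ (1 + μ))⁻¹ = C / ((4:ℝ) ^ n * R) ^ (1 + μ) :=
          (div_eq_mul_inv _ _).symm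
      _ ≤ 1 / (4:ℝ) ^ (m + 1) := by
          rw [div_le_div_iff₀ hpos1 hpos2]; nlinarith
      _ = ((4:ℝ) ^ (m + 1))⁻¹ := one_div _
  -- geometric decay of dyadic tails
  set q : ENNReal := ENNReal.ofReal ((4:ℝ) ^ (-(m + 1))) with hq
  have hgeo : ∀ j : ℕ, T ((4:ℝ) ^ (K + j) * R) ≤ q ^ j * T ((4:ℝ) ^ K * R) := by
    intro j
    induction j with
    | zero => simp
    | succ j ih =>
      have hs : R₀ ≤ (4:ℝ) ^ (K + j + 1) * R := by
        have h4 : (1:ℝ) ≤ (4:ℝ) ^ (K + j + 1) := one_le_pow₀ (by norm_num : (1:ℝ) ≤ 4)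
        nlinarith
      have h1 := hstep _ hs
      have h2 : ((4:ℝ) ^ (K + j + 1) * R) / 4 = (4:ℝ) ^ (K + j) * R := by
        rw [pow_succ]; ring
      rw [h2] at h1
      have h3 : ENNReal.ofReal (C * ((4:ℝ) ^ (K + j + 1) * R) ^ (-(1 + μ))) ≤ q :=
        ENNReal.ofReal_le_ofReal (hsmall (K + j + 1) (by omega))
      calc T ((4:ℝ) ^ (K + (j + 1)) * R)
          = T ((4:ℝ) ^ (K + j + 1) * R) := by ring_nf
        _ ≤ ENNReal.ofReal (C * ((4:ℝ) ^ (K + j + 1) * R) ^ (-(1 + μ))) *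
              T ((4:ℝ) ^ (K + j) * R) := h1
        _ ≤ q * (q ^ j * T ((4:ℝ) ^ K * R)) := mul_le_mul' h3 ih
        _ = q ^ (j + 1) * T ((4:ℝ) ^ K * R) := by ring
  -- bound for set integral with bounded norm
  have hbound : ∀ (s : Set (EuclideanSpace ℝ (Fin d))) (b : ℝ), 0 ≤ b →
      (∀ x ∈ s, ‖x‖ ≤ b) →
      (∫⁻ x in s, ENNReal.ofReal (‖x‖ ^ m) * g x)
        ≤ ENNReal.ofReal (b ^ m) * ∫⁻ x in s, g x := by
    intro s b hb hsb
    rw [← lintegral_const_mul' _ _ (ENNReal.ofReal_ne_top)]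
    refine setLIntegral_mono (hg.const_mul _) (fun x hx => ?_)
    exact mul_le_mul_left
      (ENNReal.ofReal_le_ofReal (Real.rpow_le_rpow (norm_nonneg x) (hsb x hx) hm)) _
  -- dyadic annuli
  set A : ℕ → Set (EuclideanSpace ℝ (Fin d)) :=
    fun k => {x | (4:ℝ) ^ (K + k) * R < ‖x‖ ∧ ‖x‖ ≤ (4:ℝ) ^ (K + k + 1) * R} with hA
  have hAmeas : ∀ k, MeasurableSet (A k) := by
    intro k
    exact (measurableSet_lt measurable_const measurable_norm).inter
      (measurableSet_le measurable_norm measurable_const)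
  have hmono4 : ∀ (i j : ℕ), i ≤ j → (4:ℝ) ^ i * R ≤ (4:ℝ) ^ j * R := by
    intro i j hij
    have := pow_le_pow_right₀ (by norm_num : (1:ℝ) ≤ 4) hij
    nlinarith
  have hAdisj : Pairwise (Function.onFun Disjoint A) := by
    have key : ∀ i j : ℕ, i < j → Disjoint (A i) (A j) := by
      intro i j h
      refine Set.disjoint_left.mpr (fun x hxi hxj => ?_)
      have h1 : ‖x‖ ≤ (4:ℝ) ^ (K + i + 1) * R := hxi.2
      have h2 : (4:ℝ) ^ (K + j) * R < ‖x‖ := hxj.1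
      have h3 : (4:ℝ) ^ (K + i + 1) * R ≤ (4:ℝ) ^ (K + j) * R := hmono4 _ _ (by omega)
      linarith
    intro i j hij
    rcases lt_or_gt_of_ne hij with h | h
    · exact key i j h
    · exact (key j i h).symm
  have hAunion : {x : EuclideanSpace ℝ (Fin d) | (4:ℝ) ^ K * R < ‖x‖} = ⋃ k, A k := by
    ext x
    simp only [Set.mem_setOf_eq, Set.mem_iUnion]
    constructor
    · intro hx
      have hex : ∃ k : ℕ, ‖x‖ ≤ (4:ℝ) ^ (K + k + 1) * R := by
        obtain ⟨n, hn⟩ := pow_unbounded_of_one_lt (‖x‖) (by norm_num : (1:ℝ) < 4)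
        refine ⟨n, ?_⟩
        have : (4:ℝ) ^ n * 1 ≤ (4:ℝ) ^ (K + n + 1) * R := by
          have := hmono4 n (K + n + 1) (by omega)
          nlinarith [pow_pos (by norm_num : (0:ℝ) < 4) n]
        nlinarith
      classical
      let k₀ := Nat.find hex
      refine ⟨k₀, ?_, Nat.find_spec hex⟩
      rcases Nat.eq_zero_or_pos k₀ with h0 | h0
      · have : (4:ℝ) ^ (K + k₀) * R = (4:ℝ) ^ K * R := by rw [h0]; ring_nf
        rw [this]; exact hx
      · have hnot : ¬ (‖x‖ ≤ (4:ℝ) ^ (K + (k₀ - 1) + 1) * R) :=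
          Nat.find_min hex (by omega)
        push_neg at hnot
        have : K + (k₀ - 1) + 1 = K + k₀ := by omega
        rwa [this] at hnot
    · rintro ⟨k, hk1, _⟩
      have : (4:ℝ) ^ K * R ≤ (4:ℝ) ^ (K + k) * R := hmono4 _ _ (by omega)
      linarith
  -- the weight identity
  have hid : ∀ k : ℕ, ((4:ℝ) ^ (K + k + 1) * R) ^ m
      = ((4:ℝ) ^ (K + 1) * R) ^ m * ((4:ℝ) ^ m) ^ k := by
    intro k
    have h1 : (4:ℝ) ^ (K + k + 1) * R = ((4:ℝ) ^ (K + 1) * R) * (4:ℝ) ^ k := by ring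
    rw [h1, Real.mul_rpow (by positivity) (by positivity)]
    congr 1
    rw [← Real.rpow_natCast (4:ℝ) k, ← Real.rpow_mul (by norm_num),
      ← Real.rpow_natCast ((4:ℝ) ^ m) k, ← Real.rpow_mul (by norm_num), mul_comm]
  -- ratio identity
  have hratio : ENNReal.ofReal ((4:ℝ) ^ m) * q = ENNReal.ofReal ((4:ℝ)⁻¹) := by
    rw [hq, ← ENNReal.ofReal_mul (by positivity), ← Real.rpow_add (by norm_num : (0:ℝ) < 4)]
    norm_num [Real.rpow_neg_one]
  -- main tail piece
  have htail : (∫⁻ x in {x : EuclideanSpace ℝ (Fin d) | (4:ℝ) ^ K * R < ‖x‖},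
      ENNReal.ofReal (‖x‖ ^ m) * g x) < ⊤ := by
    rw [hAunion, lintegral_iUnion hAmeas hAdisj]
    set D : ENNReal := ENNReal.ofReal (((4:ℝ) ^ (K + 1) * R) ^ m) * T ((4:ℝ) ^ K * R) with hD
    have hterm : ∀ k : ℕ, (∫⁻ x in A k, ENNReal.ofReal (‖x‖ ^ m) * g x)
        ≤ D * (ENNReal.ofReal ((4:ℝ)⁻¹)) ^ k := by
      intro k
      have h1 : (∫⁻ x in A k, ENNReal.ofReal (‖x‖ ^ m) * g x)
          ≤ ENNReal.ofReal (((4:ℝ) ^ (K + k + 1) * R) ^ m) * ∫⁻ x in A k, g x :=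
        hbound _ _ (by positivity) (fun x hx => hx.2)
      have h2 : (∫⁻ x in A k, g x) ≤ T ((4:ℝ) ^ (K + k) * R) :=
        lintegral_mono_set (fun x hx => hx.1)
      have h3 : (∫⁻ x in A k, ENNReal.ofReal (‖x‖ ^ m) * g x)
          ≤ ENNReal.ofReal (((4:ℝ) ^ (K + k + 1) * R) ^ m) *
              (q ^ k * T ((4:ℝ) ^ K * R)) :=
        le_trans h1 (mul_le_mul_right (le_trans h2 (hgeo k)) _)
      refine le_trans h3 (le_of_eq ?_)
      rw [hid k, ENNReal.ofReal_mul (by positivity), ENNReal.ofReal_pow (by positivity), hD]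
      calc ENNReal.ofReal (((4:ℝ) ^ (K + 1) * R) ^ m) * ENNReal.ofReal ((4:ℝ) ^ m) ^ k *
            (q ^ k * T ((4:ℝ) ^ K * R))
          = ENNReal.ofReal (((4:ℝ) ^ (K + 1) * R) ^ m) * T ((4:ℝ) ^ K * R) *
            ((ENNReal.ofReal ((4:ℝ) ^ m) * q) ^ k) := by ring
        _ = _ := by rw [hratio]
    have hKR : R₀ ≤ (4:ℝ) ^ K * R := by
      have h4 : (1:ℝ) ≤ (4:ℝ) ^ K := one_le_pow₀ (by norm_num : (1:ℝ) ≤ 4)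
      nlinarith
    have hDfin : D ≠ ⊤ :=
      ENNReal.mul_ne_top ENNReal.ofReal_ne_top (hfin _ hKR).ne
    have hrlt : ENNReal.ofReal ((4:ℝ)⁻¹) < 1 := by
      rw [← ENNReal.ofReal_one]
      exact ENNReal.ofReal_lt_ofReal_iff_of_nonneg (by norm_num) |>.mpr (by norm_num)
    calc (∑' k, ∫⁻ x in A k, ENNReal.ofReal (‖x‖ ^ m) * g x)
        ≤ ∑' k, D * (ENNReal.ofReal ((4:ℝ)⁻¹)) ^ k := ENNReal.tsum_le_tsum hterm
      _ = D * (1 - ENNReal.ofReal ((4:ℝ)⁻¹))⁻¹ := by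
          rw [ENNReal.tsum_mul_left, ENNReal.tsum_geometric]
      _ < ⊤ := by
          refine ENNReal.mul_lt_top hDfin.lt_top ?_
          exact ENNReal.inv_lt_top.mpr (tsub_pos_of_lt hrlt)
  -- split the original integral
  have hsplit : {x : EuclideanSpace ℝ (Fin d) | R < ‖x‖}
      ⊆ {x : EuclideanSpace ℝ (Fin d) | R < ‖x‖ ∧ ‖x‖ ≤ (4:ℝ) ^ K * R}
        ∪ {x : EuclideanSpace ℝ (Fin d) | (4:ℝ) ^ K * R < ‖x‖} := by
    intro x hx
    by_cases h : ‖x‖ ≤ (4:ℝ) ^ K * R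
    · exact Or.inl ⟨hx, h⟩
    · exact Or.inr (lt_of_not_ge h)
  have hpiece1 : (∫⁻ x in {x : EuclideanSpace ℝ (Fin d) | R < ‖x‖ ∧ ‖x‖ ≤ (4:ℝ) ^ K * R},
      ENNReal.ofReal (‖x‖ ^ m) * g x) < ⊤ := by
    refine lt_of_le_of_lt (hbound _ ((4:ℝ) ^ K * R) (by positivity) (fun x hx => hx.2)) ?_
    refine ENNReal.mul_lt_top ENNReal.ofReal_lt_top ?_
    have : (∫⁻ x in {x : EuclideanSpace ℝ (Fin d) | R < ‖x‖ ∧ ‖x‖ ≤ (4:ℝ) ^ K * R}, g x)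
        ≤ T R := lintegral_mono_set (fun x hx => hx.1)
    exact lt_of_le_of_lt this (hfin R hRR₀)
  calc (∫⁻ x in {x : EuclideanSpace ℝ (Fin d) | R < ‖x‖},
        ENNReal.ofReal (‖x‖ ^ m) * g x)
      ≤ ∫⁻ x in ({x : EuclideanSpace ℝ (Fin d) | R < ‖x‖ ∧ ‖x‖ ≤ (4:ℝ) ^ K * R}
          ∪ {x : EuclideanSpace ℝ (Fin d) | (4:ℝ) ^ K * R < ‖x‖}),
          ENNReal.ofReal (‖x‖ ^ m) * g x := lintegral_mono_set hsplit
    _ ≤ _ + _ := lintegral_union_le _ _ _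
    _ < ⊤ := ENNReal.add_lt_top.mpr ⟨hpiece1, htail⟩
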